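/- arXiv:1710.05778 — 2 statements merged into one kernel-verified Lean document; each statement's English description precedes it below -/
import Mathlib

section
/- Let h : ℝ^n → ℝ be differentiable with L_h-Lipschitz gradient (L_h > 0), g : ℝ^n → ℝ convex, P : ℝ^n → ℝ ∪ {∞} proper closed with inf P > −∞, and F := h + P − g. Let L_max ≥ L_min > 0, τ > 1, c > 0 and define ñ := max{⌈(log(L_h + c) − log L_min)/log τ⌉, 1}. Then for any x̄ ∈ dom P, any convex subgradient ζ ∈ ∂g(x̄), and any L⁰ ∈ [L_min, L_max], one has τ^ñ L⁰ ≥ L_h + c, and there exists j ∈ {0, 1, …, ñ} such that every global minimizer u of x ↦ ⟨∇h(x̄) − ζ, x − x̄⟩ + (τ^j L⁰/2)‖x − x̄‖² + P(x) satisfies F(u) ≤ F(x̄) − (c/2)‖u − x̄‖². In particular, the line-search criterion in the NPG method with majorization is satisfied after at most ñ inner iterations, and the accepted parameter is bounded by τ^ñ L_max. -/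
/-!
By the descent lemma for the `Lh`-smooth part and the subgradient inequality for `g`, a global
minimizer `u` of the model with parameter `L` satisfies
`F u ≤ F x̄ - ((L - Lh) / 2) ‖u - x̄‖²` (compare the model at `u` with its value `P x̄` at `x̄`).
The choice of `ñ` makes `τ ^ ñ * L⁰ ≥ Lh + c`, so the trial `j = ñ` is always accepted.
-/

open scoped NNReal RealInnerProductSpace

section Descent

variable {E : Type*} [NormedAddCommGroup E] [InnerProductSpace ℝ E]
  {f : E → ℝ} {f' : E → E} {K : ℝ≥0}

lemma LipschitzWith.inner_sub_le_mul_sq (hlip : LipschitzWith K f') (x v : E) {t : ℝ}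
    (ht : 0 ≤ t) : ⟪f' (x + t • v), v⟫ - ⟪f' x, v⟫ ≤ K * t * ‖v‖ ^ 2 := by
  rw [← inner_sub_left]
  calc ⟪f' (x + t • v) - f' x, v⟫ ≤ ‖f' (x + t • v) - f' x‖ * ‖v‖ := real_inner_le_norm _ _
    _ ≤ K * ‖(x + t • v) - x‖ * ‖v‖ := by gcongr; exact hlip.norm_sub_le _ _
    _ = K * t * ‖v‖ ^ 2 := by
      rw [add_sub_cancel_left, norm_smul, Real.norm_of_nonneg ht]; ring

theorem descent_lemma [CompleteSpace E] (hf : ∀ x, HasGradientAt f (f' x) x)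
    (hlip : LipschitzWith K f') (x y : E) : f y ≤ f x + ⟪f' x, y - x⟫ + K / 2 * ‖y - x‖ ^ 2 := by
  set v := y - x
  let ψ : ℝ → ℝ := fun t ↦ f (x + t • v) - t * ⟪f' x, v⟫ - K / 2 * t ^ 2 * ‖v‖ ^ 2
  have hψ : ∀ t, HasDerivAt ψ (⟪f' (x + t • v), v⟫ - ⟪f' x, v⟫ - K * t * ‖v‖ ^ 2) t := by
    intro t
    have hline : HasDerivAt (fun t : ℝ ↦ x + t • v) v t := by
      simpa using ((hasDerivAt_id t).smul_const v).const_add x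
    have hcomp : HasDerivAt (fun t : ℝ ↦ f (x + t • v)) ⟪f' (x + t • v), v⟫ t :=
      (hf _).hasFDerivAt.comp_hasDerivAt t hline
    have hquad : HasDerivAt (fun t : ℝ ↦ K / 2 * t ^ 2 * ‖v‖ ^ 2) (K * t * ‖v‖ ^ 2) t := by
      refine (((hasDerivAt_pow 2 t).const_mul ((K : ℝ) / 2)).mul_const (‖v‖ ^ 2)).congr_deriv ?_
      ring
    exact (hcomp.sub (hasDerivAt_mul_const ⟪f' x, v⟫)).sub hquad
  have hanti : AntitoneOn ψ (Set.Icc 0 1) :=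
    antitoneOn_of_hasDerivWithinAt_nonpos (convex_Icc 0 1)
      (fun t _ ↦ (hψ t).continuousAt.continuousWithinAt) (fun t _ ↦ (hψ t).hasDerivWithinAt)
      fun t ht ↦ by
        rw [interior_Icc] at ht
        linarith [hlip.inner_sub_le_mul_sq x v ht.1.le]
  have := hanti (Set.left_mem_Icc.2 zero_le_one) (Set.right_mem_Icc.2 zero_le_one) zero_le_one
  simp only [ψ, v] at this
  norm_num at this
  linarith

end Descent

lemma le_zpow_mul_of_ceil_log_div_le {a b τ : ℝ} {m : ℤ} (ha : 0 < a) (hb : 0 < b) (hτ : 1 < τ)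
    (hm : ⌈(Real.log b - Real.log a) / Real.log τ⌉ ≤ m) : b ≤ τ ^ m * a := by
  have hlog : (Real.log b - Real.log a) / Real.log τ ≤ m :=
    (Int.le_ceil _).trans (Int.cast_le.2 hm)
  rw [div_le_iff₀ (Real.log_pos hτ)] at hlog
  rw [← Real.log_le_log_iff hb (by positivity), Real.log_mul (by positivity) ha.ne',
    Real.log_zpow]
  linarith

lemma sufficient_decrease_of_le_majorant {E : Type*} [NormedAddCommGroup E]
    [InnerProductSpace ℝ E] {h g : E → ℝ} {P : E → EReal} {d ζ x u : E} {K L c : ℝ}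
    (hPbot : ∀ y, P y ≠ ⊥) (hPx : P x ≠ ⊤)
    (hdesc : h u ≤ h x + ⟪d, u - x⟫ + K / 2 * ‖u - x‖ ^ 2)
    (hζ : g x + ⟪ζ, u - x⟫ ≤ g u) (hL : K + c ≤ L)
    (hmin : ((⟪d - ζ, u - x⟫ + L / 2 * ‖u - x‖ ^ 2 : ℝ) : EReal) + P u ≤ P x) :
    (h u : EReal) + P u - (g u : ℝ) ≤
      (h x : EReal) + P x - (g x : ℝ) - (((c / 2) * ‖u - x‖ ^ 2 : ℝ) : EReal) := by
  lift P x to ℝ using ⟨hPx, hPbot x⟩ with px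
  have hPu : P u ≠ ⊤ := by
    rintro htop
    rw [htop, EReal.coe_add_top, top_le_iff] at hmin
    exact EReal.coe_ne_top _ hmin
  lift P u to ℝ using ⟨hPu, hPbot u⟩ with pu
  norm_cast at hmin ⊢
  have := mul_nonneg (sub_nonneg.2 hL) (sq_nonneg ‖u - x‖)
  rw [inner_sub_left] at hmin
  linarith

theorem npg_major_linesearch_finite_general {n : ℕ}
    (h : EuclideanSpace ℝ (Fin n) → ℝ)
    (h' : EuclideanSpace ℝ (Fin n) → EuclideanSpace ℝ (Fin n))
    (Lh : ℝ) (hLh : 0 < Lh)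
    (hgrad : ∀ x, HasGradientAt h (h' x) x)
    (hlip : LipschitzWith (Real.toNNReal Lh) h')
    (g : EuclideanSpace ℝ (Fin n) → ℝ)
    (P : EuclideanSpace ℝ (Fin n) → EReal)
    (hPbot : ∀ x, P x ≠ ⊥)
    (Lmin Lmax : ℝ) (hLmin : 0 < Lmin)
    (τ : ℝ) (hτ : 1 < τ) (c : ℝ) (hc : 0 < c)
    (ntilde : ℤ)
    (hntilde : ntilde = max (⌈(Real.log (Lh + c) - Real.log Lmin) / Real.log τ⌉) 1)
    (xbar : EuclideanSpace ℝ (Fin n)) (hxbar : P xbar ≠ ⊤)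
    (ζ : EuclideanSpace ℝ (Fin n))
    (hζ : ∀ y, g xbar + inner ℝ ζ (y - xbar) ≤ g y)
    (L0 : ℝ) (hL0 : Lmin ≤ L0 ∧ L0 ≤ Lmax) :
    τ ^ ntilde * L0 ≥ Lh + c ∧
    ∃ j : ℕ, (j : ℤ) ≤ ntilde ∧ τ ^ j * L0 ≤ τ ^ ntilde * Lmax ∧
      ∀ u : EuclideanSpace ℝ (Fin n),
        (∀ x, ((inner ℝ (h' xbar - ζ) (u - xbar) + (τ ^ j * L0 / 2) * ‖u - xbar‖ ^ 2 : ℝ) : EReal)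
              + P u ≤
            ((inner ℝ (h' xbar - ζ) (x - xbar) + (τ ^ j * L0 / 2) * ‖x - xbar‖ ^ 2 : ℝ) : EReal)
              + P x) →
        (h u : EReal) + P u - (g u : ℝ) ≤
          (h xbar : EReal) + P xbar - (g xbar : ℝ) -
            (((c / 2) * ‖u - xbar‖ ^ 2 : ℝ) : EReal) := by
  have hn : 0 ≤ ntilde := hntilde ▸ le_max_of_le_right zero_le_one
  have hτn : τ ^ ntilde.toNat = τ ^ ntilde := by rw [← zpow_natCast, Int.toNat_of_nonneg hn]
  have hbound : Lh + c ≤ τ ^ ntilde * L0 :=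
    (le_zpow_mul_of_ceil_log_div_le hLmin (by linarith) hτ (hntilde ▸ le_max_left _ _)).trans
      (mul_le_mul_of_nonneg_left hL0.1 (by positivity))
  refine ⟨hbound, ntilde.toNat, by omega, hτn ▸ mul_le_mul_of_nonneg_left hL0.2 (by positivity),
    fun u hu ↦ ?_⟩
  have hdesc := descent_lemma hgrad hlip xbar u
  rw [Real.coe_toNNReal _ hLh.le] at hdesc
  exact sufficient_decrease_of_le_majorant hPbot hxbar hdesc (hζ u) (hτn ▸ hbound)
    (by simpa using hu xbar)

/-- Finite termination of the NPG line search with majorization.  With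
`ñ := max{⌈(log(L_h + c) − log L_min)/log τ⌉, 1}` one has `τ^ñ L⁰ ≥ L_h + c`,
and there is `j ∈ {0,…,ñ}` such that every global minimizer `u` of
`x ↦ ⟨∇h(x̄) − ζ, x − x̄⟩ + (τ^j L⁰/2)‖x − x̄‖² + P(x)` satisfies
`F(u) ≤ F(x̄) − (c/2)‖u − x̄‖²`; the accepted parameter is at most
`τ^ñ L_max`. -/
theorem npg_major_linesearch_finite {n : ℕ}
    (h : EuclideanSpace ℝ (Fin n) → ℝ)
    (h' : EuclideanSpace ℝ (Fin n) → EuclideanSpace ℝ (Fin n))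
    (Lh : ℝ) (hLh : 0 < Lh)
    (hgrad : ∀ x, HasGradientAt h (h' x) x)
    (hlip : LipschitzWith (Real.toNNReal Lh) h')
    (g : EuclideanSpace ℝ (Fin n) → ℝ) (hg : ConvexOn ℝ Set.univ g)
    (P : EuclideanSpace ℝ (Fin n) → EReal)
    (hPproper : ∃ x, P x ≠ ⊤) (hPbot : ∀ x, P x ≠ ⊥)
    (hPclosed : LowerSemicontinuous P)
    (hPbdd : ∃ b : ℝ, ∀ x, (b : EReal) ≤ P x)
    (Lmin Lmax : ℝ) (hLmin : 0 < Lmin) (hLminmax : Lmin ≤ Lmax)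
    (τ : ℝ) (hτ : 1 < τ) (c : ℝ) (hc : 0 < c)
    (ntilde : ℤ)
    (hntilde : ntilde = max (⌈(Real.log (Lh + c) - Real.log Lmin) / Real.log τ⌉) 1)
    (xbar : EuclideanSpace ℝ (Fin n)) (hxbar : P xbar ≠ ⊤)
    (ζ : EuclideanSpace ℝ (Fin n))
    (hζ : ∀ y, g xbar + inner ℝ ζ (y - xbar) ≤ g y)
    (L0 : ℝ) (hL0 : Lmin ≤ L0 ∧ L0 ≤ Lmax) :
    τ ^ ntilde * L0 ≥ Lh + c ∧
    ∃ j : ℕ, (j : ℤ) ≤ ntilde ∧ τ ^ j * L0 ≤ τ ^ ntilde * Lmax ∧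
      ∀ u : EuclideanSpace ℝ (Fin n),
        (∀ x, ((inner ℝ (h' xbar - ζ) (u - xbar) + (τ ^ j * L0 / 2) * ‖u - xbar‖ ^ 2 : ℝ) : EReal)
              + P u ≤
            ((inner ℝ (h' xbar - ζ) (x - xbar) + (τ ^ j * L0 / 2) * ‖x - xbar‖ ^ 2 : ℝ) : EReal)
              + P x) →
        (h u : EReal) + P u - (g u : ℝ) ≤
          (h xbar : EReal) + P xbar - (g xbar : ℝ) -
            (((c / 2) * ‖u - xbar‖ ^ 2 : ℝ) : EReal) :=
  npg_major_linesearch_finite_general h h' Lh hLh hgrad hlip g P hPbot Lmin Lmax hLmin τ hτ c hc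
    ntilde hntilde xbar hxbar ζ hζ L0 hL0
end

section
/- Let f : ℝ^n → ℝ be continuous, P_0 : ℝ^n → [0, ∞] proper closed with f + P_0 level-bounded, and for i = 1,…,m let A_i : ℝ^n → ℝ^{n_i} be linear and P_i : ℝ^{n_i} → [0, ∞] proper closed, with dom P_0 ∩ ⋂_{i=1}^m A_i^{−1}(dom P_i) ≠ ∅. Define F(x) := f(x) + P_0(x) + Σ_{i=1}^m P_i(A_i x) and, for positive λ = (λ_1,…,λ_m), F_λ(x) := f(x) + P_0(x) + Σ_{i=1}^m e_{λ_i} P_i(A_i x). Suppose λ_{i,t} > 0 with λ_{i,t} → 0, ε_t > 0 with ε_t → 0, and {x^t} satisfies F_{λ_t}(x^t) ≤ inf F_{λ_t} + ε_t for all t. Then every accumulation point of {x^t} is a global minimizer of F. -/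
open Filter Topology

/-- The Moreau envelope `e_λ h(x) = inf_y { (1/(2λ))‖x − y‖² + h(y) }`. -/
noncomputable def mEnv {d : ℕ} (h : EuclideanSpace ℝ (Fin d) → EReal) (lam : ℝ)
    (x : EuclideanSpace ℝ (Fin d)) : EReal :=
  ⨅ y, (((1 / (2 * lam)) * ‖x - y‖ ^ 2 : ℝ) : EReal) + h y

set_option linter.unusedVariables false in
lemma mEnv_le {d : ℕ} (h : EuclideanSpace ℝ (Fin d) → EReal) (lam : ℝ)
    (u : EuclideanSpace ℝ (Fin d)) : mEnv h lam u ≤ h u := by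
  rw [mEnv]
  exact iInf_le_of_le u (by simp)

lemma mEnv_nonneg {d : ℕ} {h : EuclideanSpace ℝ (Fin d) → EReal} (hnn : ∀ y, 0 ≤ h y)
    {lam : ℝ} (hl : 0 ≤ lam) (u : EuclideanSpace ℝ (Fin d)) : 0 ≤ mEnv h lam u := by
  refine le_iInf fun w => add_nonneg ?_ (hnn w)
  have h0 : (0:ℝ) ≤ 1 / (2 * lam) * ‖u - w‖ ^ 2 :=
    mul_nonneg (div_nonneg zero_le_one (by linarith)) (sq_nonneg _)
  exact_mod_cast h0

lemma mEnv_lb {d : ℕ} {h : EuclideanSpace ℝ (Fin d) → EReal} (hnn : ∀ y, 0 ≤ h y)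
    (hlsc : LowerSemicontinuous h) (y : EuclideanSpace ℝ (Fin d)) (r : ℝ)
    (hr : (r : EReal) < h y) :
    ∃ δ > (0:ℝ), ∃ Λ > (0:ℝ), ∀ lam : ℝ, 0 < lam → lam < Λ →
      ∀ u : EuclideanSpace ℝ (Fin d), ‖u - y‖ < δ → (r : EReal) ≤ mEnv h lam u := by
  rcases le_or_gt r 0 with hr0 | hr0
  · refine ⟨1, one_pos, 1, one_pos, fun lam hl _ u _ => ?_⟩
    have h0 : (r:EReal) ≤ (0:EReal) := by exact_mod_cast hr0
    exact h0.trans (mEnv_nonneg hnn hl.le u)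
  · obtain ⟨δ0, hδ0, hball⟩ := Metric.eventually_nhds_iff.1 (hlsc y (r:EReal) hr)
    refine ⟨δ0/2, by positivity, δ0^2/(8*r), by positivity, fun lam hl hlΛ u hu => ?_⟩
    refine le_iInf fun w => ?_
    rcases lt_or_ge (dist w y) δ0 with hw | hw
    · have h1 : (r:EReal) ≤ h w := (hball hw).le
      have h2 : (0:EReal) ≤ ((1/(2*lam) * ‖u - w‖^2 : ℝ) : EReal) := by
        have : (0:ℝ) ≤ 1/(2*lam) * ‖u - w‖^2 :=
          mul_nonneg (by positivity) (sq_nonneg _)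
        exact_mod_cast this
      exact h1.trans (le_add_of_nonneg_left h2)
    · have htri : dist w y ≤ ‖u - w‖ + ‖u - y‖ := by
        have := dist_triangle w u y
        rw [dist_eq_norm, dist_eq_norm] at this
        rw [show ‖u - w‖ = ‖w - u‖ from (norm_sub_rev _ _), show ‖u - y‖ = ‖u - y‖ from rfl]
        simpa [dist_eq_norm] using this
      have hw2 : δ0/2 ≤ ‖u - w‖ := by linarith
      have hq : r ≤ 1/(2*lam) * ‖u - w‖^2 := by
        have hpos : (0:ℝ) < 1/(2*lam) := by positivity
        have h2 : r < δ0^2/(8*lam) := by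
          rw [lt_div_iff₀ (by positivity)]
          rw [lt_div_iff₀ (by positivity)] at hlΛ
          nlinarith
        have hA : (δ0/2)^2 ≤ ‖u - w‖^2 := by nlinarith
        have h1 : δ0^2/(8*lam) ≤ 1/(2*lam) * ‖u - w‖^2 := by
          calc δ0^2/(8*lam) = 1/(2*lam) * (δ0/2)^2 := by
                field_simp
                ring
            _ ≤ 1/(2*lam) * ‖u - w‖^2 := mul_le_mul_of_nonneg_left hA hpos.le
        linarith
      have hcast : (r:EReal) ≤ ((1/(2*lam) * ‖u-w‖^2 :ℝ):EReal) := by exact_mod_cast hq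
      exact hcast.trans (le_add_of_nonneg_right (hnn w))

lemma ereal_coe_fsum {ι : Type*} (s : Finset ι) (r : ι → ℝ) :
    ((∑ j ∈ s, r j : ℝ) : EReal) = ∑ j ∈ s, ((r j : ℝ) : EReal) :=
  map_sum (⟨⟨Real.toEReal, EReal.coe_zero⟩, EReal.coe_add⟩ : ℝ →+ EReal) _ _

lemma ereal_sum_bot_lt {ι : Type*} (s : Finset ι) (t : ι → EReal)
    (h : ∀ j ∈ s, ⊥ < t j) : ⊥ < ∑ j ∈ s, t j := by
  classical
  induction s using Finset.induction_on with
  | empty => simp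
  | @insert a s ha ih =>
    rw [Finset.sum_insert ha]
    rw [EReal.bot_lt_add_iff]
    exact ⟨h a (Finset.mem_insert_self _ _), ih fun j hj => h j (Finset.mem_insert_of_mem hj)⟩

lemma ereal_split_two {u v : EReal} (hu : ⊥ < u) (hv : ⊥ < v) {c : ℝ}
    (hc : (c : EReal) < u + v) :
    ∃ c1 c2 : ℝ, c1 + c2 = c ∧ (c1 : EReal) < u ∧ (c2 : EReal) < v := by
  rcases eq_or_ne u ⊤ with hT | hT
  · obtain ⟨c2, hc2⟩ : ∃ c2 : ℝ, (c2 : EReal) < v := by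
      rcases eq_or_ne v ⊤ with h | h
      · exact ⟨0, h ▸ EReal.coe_lt_top 0⟩
      · lift v to ℝ using ⟨h, hv.ne'⟩
        exact ⟨v - 1, by exact_mod_cast sub_one_lt v⟩
    exact ⟨c - c2, c2, by ring, hT ▸ EReal.coe_lt_top _, hc2⟩
  · lift u to ℝ using ⟨hT, hu.ne'⟩
    have h1 : ((c - u : ℝ) : EReal) < v := by
      rw [EReal.coe_sub]
      refine (EReal.sub_lt_iff (Or.inl (by simp)) (Or.inl (by simp))).2 ?_
      rwa [add_comm] at hc
    obtain ⟨c2, h2, h3⟩ := EReal.exists_between_coe_real h1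
    refine ⟨c - c2, c2, by ring, ?_, h3⟩
    have : c - u < c2 := by exact_mod_cast h2
    exact_mod_cast (by linarith : c - c2 < u)

lemma ereal_split_sum {ι : Type*} (s : Finset ι) (t : ι → EReal)
    (ht : ∀ j ∈ s, ⊥ < t j) : ∀ c : ℝ, (c : EReal) < ∑ j ∈ s, t j →
    ∃ r : ι → ℝ, (∀ j ∈ s, (r j : EReal) < t j) ∧
      (c : EReal) < ∑ j ∈ s, ((r j : ℝ) : EReal) := by
  classical
  induction s using Finset.induction_on with
  | empty =>
    intro c hc
    refine ⟨fun _ => 0, by simp, by simpa using hc⟩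
  | @insert a s ha ih =>
    intro c hc
    rw [Finset.sum_insert ha] at hc
    obtain ⟨c1, c2, hsum, h1, h2⟩ := ereal_split_two (ht a (Finset.mem_insert_self _ _))
      (ereal_sum_bot_lt s t fun j hj => ht j (Finset.mem_insert_of_mem hj)) hc
    obtain ⟨r, hr1, hr2⟩ := ih (fun j hj => ht j (Finset.mem_insert_of_mem hj)) c2 h2
    refine ⟨Function.update r a c1, fun j hj => ?_, ?_⟩
    · rcases Finset.mem_insert.1 hj with hh | hh
      · subst hh; simpa using h1
      · rw [Function.update_of_ne (by intro hja; subst hja; exact ha hh)]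
        exact hr1 j hh
    · rw [Finset.sum_insert ha, Function.update_self]
      have hsum2 : ∑ j ∈ s, ((Function.update r a c1 j : ℝ) : EReal)
          = ∑ j ∈ s, ((r j : ℝ) : EReal) := by
        refine Finset.sum_congr rfl fun j hj => ?_
        rw [Function.update_of_ne (by intro hja; subst hja; exact ha hj)]
      rw [hsum2, ← hsum, EReal.coe_add]
      exact EReal.add_lt_add_left_coe hr2 c1

/-- If in SDCAM the approximation functions `F_{λ_t}` are minimized up to
accuracy `ε_t → 0`, then every accumulation point of `{x^t}` is a global
minimizer of `F`. -/
theorem sdcam_inexact_global_min {n m : ℕ} {ni : Fin m → ℕ}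
    (f : EuclideanSpace ℝ (Fin n) → ℝ) (hf : Continuous f)
    (P0 : EuclideanSpace ℝ (Fin n) → EReal)
    (hP0nn : ∀ x, 0 ≤ P0 x) (hP0proper : ∃ x, P0 x ≠ ⊤)
    (hP0closed : LowerSemicontinuous P0)
    (hlevel : ∀ r : ℝ, Bornology.IsBounded
      {x : EuclideanSpace ℝ (Fin n) | (f x : EReal) + P0 x ≤ (r : EReal)})
    (A : (i : Fin m) → EuclideanSpace ℝ (Fin n) →L[ℝ] EuclideanSpace ℝ (Fin (ni i)))
    (P : (i : Fin m) → EuclideanSpace ℝ (Fin (ni i)) → EReal)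
    (hPnn : ∀ i y, 0 ≤ P i y) (hPproper : ∀ i, ∃ y, P i y ≠ ⊤)
    (hPclosed : ∀ i, LowerSemicontinuous (P i))
    (hfeas : ∃ x0, P0 x0 ≠ ⊤ ∧ ∀ i, P i (A i x0) ≠ ⊤)
    (lam : Fin m → ℕ → ℝ) (hlampos : ∀ i t, 0 < lam i t)
    (hlam : ∀ i, Tendsto (lam i) atTop (𝓝 0))
    (ε : ℕ → ℝ) (hεpos : ∀ t, 0 < ε t) (hε : Tendsto ε atTop (𝓝 0))
    (x : ℕ → EuclideanSpace ℝ (Fin n))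
    (hx : ∀ t, (f (x t) : EReal) + P0 (x t) +
        ∑ i, mEnv (P i) (lam i t) (A i (x t)) ≤
      (⨅ z : EuclideanSpace ℝ (Fin n),
        (f z : EReal) + P0 z + ∑ i, mEnv (P i) (lam i t) (A i z)) + (ε t : EReal)) :
    ∀ xstar, MapClusterPt xstar atTop x →
      ∀ z, (f xstar : EReal) + P0 xstar + ∑ i, P i (A i xstar) ≤
        (f z : EReal) + P0 z + ∑ i, P i (A i z) := by
  intro xstar hcl z
  by_contra hlt
  push_neg at hlt
  obtain ⟨c, hc1, hc2⟩ := EReal.exists_between_coe_real hlt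
  obtain ⟨b, hb1, hb2⟩ := EReal.exists_between_coe_real hc1
  have hbc : b < c := by exact_mod_cast hb2
  have hbot0 : (⊥ : EReal) < 0 := by simpa using EReal.bot_lt_coe 0
  have hbotP0 : (⊥ : EReal) < (f xstar : EReal) + P0 xstar := by
    rw [EReal.bot_lt_add_iff]
    exact ⟨EReal.bot_lt_coe _, lt_of_lt_of_le hbot0 (hP0nn xstar)⟩
  have hbotS : (⊥ : EReal) < ∑ i, P i (A i xstar) :=
    ereal_sum_bot_lt _ _ fun i _ => lt_of_lt_of_le hbot0 (hPnn i _)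
  obtain ⟨cA, cS, hsum1, hA1, hS1⟩ := ereal_split_two hbotP0 hbotS hc2
  obtain ⟨ca, cb, hsum2, hfa, hP0b⟩ :=
    ereal_split_two (EReal.bot_lt_coe _) (lt_of_lt_of_le hbot0 (hP0nn xstar)) hA1
  obtain ⟨rr, hrr, hScS⟩ := ereal_split_sum Finset.univ (fun i => P i (A i xstar))
    (fun i _ => lt_of_lt_of_le hbot0 (hPnn i _)) cS hS1
  choose δ hδ Λ hΛ hprop using fun i =>
    mEnv_lb (hPnn i) (hPclosed i) (A i xstar) (rr i) (hrr i (Finset.mem_univ i))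
  have hfca : ca < f xstar := by exact_mod_cast hfa
  have hE1 : ∀ᶠ w in 𝓝 xstar, ca < f w :=
    (hf.tendsto xstar).eventually (eventually_gt_nhds hfca)
  have hE2 : ∀ᶠ w in 𝓝 xstar, (cb : EReal) < P0 w := hP0closed xstar _ hP0b
  have hE3 : ∀ᶠ w in 𝓝 xstar, ∀ i, ‖A i w - A i xstar‖ < δ i := by
    rw [eventually_all]
    intro i
    have hball : ∀ᶠ v in 𝓝 (A i xstar), ‖v - A i xstar‖ < δ i := by
      filter_upwards [Metric.ball_mem_nhds (A i xstar) (hδ i)] with v hv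
      rwa [Metric.mem_ball, dist_eq_norm] at hv
    exact ((A i).continuous.tendsto xstar).eventually hball
  have hE := hE1.and (hE2.and hE3)
  have hfreq := (mapClusterPt_iff_frequently.1 hcl) _ hE
  have hT1 : ∀ᶠ t in atTop, ε t < c - b :=
    hε.eventually (eventually_lt_nhds (by linarith))
  have hT2 : ∀ᶠ t in atTop, ∀ i, lam i t < Λ i := by
    rw [eventually_all]
    exact fun i => (hlam i).eventually (eventually_lt_nhds (hΛ i))
  obtain ⟨t, ⟨hx1, hx2, hx3⟩, hε1, hl1⟩ := (hfreq.and_eventually (hT1.and hT2)).exists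
  have hup : (f (x t) : EReal) + P0 (x t) + ∑ i, mEnv (P i) (lam i t) (A i (x t)) ≤
      (c : EReal) := by
    refine (hx t).trans ?_
    have h1 : (⨅ z', (f z' : EReal) + P0 z' + ∑ i, mEnv (P i) (lam i t) (A i z')) ≤
        (f z : EReal) + P0 z + ∑ i, P i (A i z) := by
      refine (iInf_le _ z).trans ?_
      exact add_le_add le_rfl (Finset.sum_le_sum fun i _ => mEnv_le _ _ _)
    calc (⨅ z', (f z' : EReal) + P0 z' + ∑ i, mEnv (P i) (lam i t) (A i z')) + (ε t : EReal)
        ≤ ((f z : EReal) + P0 z + ∑ i, P i (A i z)) + (ε t : EReal) := add_le_add h1 le_rfl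
      _ ≤ (b : EReal) + ((c - b : ℝ) : EReal) := add_le_add hb1.le (by exact_mod_cast hε1.le)
      _ = (c : EReal) := by rw [← EReal.coe_add]; norm_num
  have hS2 : cS < ∑ i, rr i := by
    rw [← ereal_coe_fsum] at hScS
    exact_mod_cast hScS
  have hlow1 : (c : EReal) < ((ca : EReal) + (cb : EReal)) + ∑ i, ((rr i : ℝ) : EReal) := by
    rw [← EReal.coe_add, ← ereal_coe_fsum, ← EReal.coe_add]
    exact_mod_cast (by linarith : c < ca + cb + ∑ i, rr i)
  have hlow : (c : EReal) < (f (x t) : EReal) + P0 (x t) +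
      ∑ i, mEnv (P i) (lam i t) (A i (x t)) := by
    refine hlow1.trans_le ?_
    refine add_le_add (add_le_add ?_ hx2.le) ?_
    · exact_mod_cast hx1.le
    · exact Finset.sum_le_sum fun i _ =>
        hprop i (lam i t) (hlampos i t) (hl1 i) (A i (x t)) (hx3 i)
  exact hlow.not_ge hup
end
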